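/- arXiv:1112.4174 — 6 statements merged into one kernel-verified Lean document; each statement's English description precedes it below -/
import Mathlib

section
/- Let K ≥ 1 be a real number, let G be a group, let A be a K-approximate subgroup of G, and let H be a subgroup of G. Let n denote the number of left cosets of H that have nonempty intersection with A. Then |A| ≤ |A² ∩ H| · n and |A² ∩ H| · n ≤ |A³|. -/
open scoped Pointwise

/-- A finite subset `A` of a group `G` is a `K`-approximate subgroup if it is
symmetric, contains the identity, and there is a symmetric subset `X ⊆ A·A·A`
with `|X| ≤ K` such that `A·A ⊆ X·A`. -/
def IsApproxSubgroup {G : Type*} [Group G] (K : ℝ) (A : Set G) : Prop :=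
  A.Finite ∧ (1 : G) ∈ A ∧ (∀ a ∈ A, a⁻¹ ∈ A) ∧
    ∃ X : Set G, X.Finite ∧ X ⊆ A * A * A ∧ (∀ x ∈ X, x⁻¹ ∈ X) ∧
      (X.ncard : ℝ) ≤ K ∧ A * A ⊆ X * A

lemma my_ncard_prod {α β : Type*} (s : Set α) (t : Set β) :
    (s ×ˢ t).ncard = s.ncard * t.ncard := by
  rw [← Nat.card_coe_set_eq, ← Nat.card_coe_set_eq, ← Nat.card_coe_set_eq,
    Nat.card_congr (Equiv.Set.prod s t), Nat.card_prod]

/-- Lemma (basic)(i): `|A| ≤ |A² ∩ H| · n ≤ |A³|`, where `n` is the number of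
left cosets of `H` that meet `A`. -/
theorem stmt_0 {G : Type*} [Group G] (K : ℝ) (hK : 1 ≤ K) (A : Set G)
    (hA : IsApproxSubgroup K A) (H : Subgroup G) (n : ℕ)
    (hn : n = ((QuotientGroup.mk '' A : Set (G ⧸ H))).ncard) :
    A.ncard ≤ (A * A ∩ (H : Set G)).ncard * n ∧
      (A * A ∩ (H : Set G)).ncard * n ≤ (A * A * A).ncard := by
  classical
  obtain ⟨hAfin, h1, hsymm, -⟩ := hA
  set S : Set (G ⧸ H) := QuotientGroup.mk '' A with hS
  have hSfin : S.Finite := hAfin.image _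
  have hex : ∀ q ∈ S, ∃ x, x ∈ A ∧ QuotientGroup.mk x = q := fun q hq => hq
  choose! rep hrepA hrepq using hex
  have hAA : (A * A).Finite := hAfin.mul hAfin
  have hAAA : (A * A * A).Finite := hAA.mul hAfin
  have hI : (A * A ∩ (H : Set G)).Finite := hAA.inter_of_left _
  have hprodfin : ((A * A ∩ (H : Set G)) ×ˢ S).Finite := hI.prod hSfin
  have hprod : ((A * A ∩ (H : Set G)) ×ˢ S).ncard = (A * A ∩ (H : Set G)).ncard * n := by
    rw [my_ncard_prod, hn]
  constructor
  · -- injection A → (A²∩H) ×ˢ S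
    rw [← hprod]
    refine Set.ncard_le_ncard_of_injOn
      (fun x => ((rep (QuotientGroup.mk x))⁻¹ * x, QuotientGroup.mk x)) ?_ ?_ hprodfin
    · intro x hx
      have hqS : (QuotientGroup.mk x : G ⧸ H) ∈ S := ⟨x, hx, rfl⟩
      have hra := hrepA _ hqS
      have hrq := hrepq _ hqS
      refine Set.mem_prod.mpr ⟨⟨Set.mul_mem_mul (hsymm _ hra) hx, ?_⟩, hqS⟩
      exact (QuotientGroup.eq).mp hrq
    · intro x hx y hy hxy
      have h2 : (QuotientGroup.mk x : G ⧸ H) = QuotientGroup.mk y := (Prod.ext_iff.mp hxy).2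
      have h1' : (rep (QuotientGroup.mk x))⁻¹ * x = (rep (QuotientGroup.mk y))⁻¹ * y :=
        (Prod.ext_iff.mp hxy).1
      rw [h2] at h1'
      exact mul_left_cancel h1'
  · -- injection (A²∩H) ×ˢ S → A³
    rw [← hprod]
    refine Set.ncard_le_ncard_of_injOn (fun p => rep p.2 * p.1) ?_ ?_ hAAA
    · rintro ⟨h, q⟩ hp
      obtain ⟨⟨hhAA, hhH⟩, hqS⟩ := Set.mem_prod.mp hp
      have : rep q * h ∈ A * (A * A) := Set.mul_mem_mul (hrepA _ hqS) hhAA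
      rwa [← mul_assoc] at this
    · rintro ⟨h, q⟩ hp ⟨h', q'⟩ hp' heq
      obtain ⟨⟨-, hhH0⟩, hqS0⟩ := Set.mem_prod.mp hp
      obtain ⟨⟨-, hhH0'⟩, hqS0'⟩ := Set.mem_prod.mp hp'
      have hqS : q ∈ S := hqS0
      have hqS' : q' ∈ S := hqS0'
      have hhH : h ∈ (H : Set G) := hhH0
      have hhH' : h' ∈ (H : Set G) := hhH0'
      simp only at heq
      have hq : (QuotientGroup.mk (rep q * h) : G ⧸ H) = q := by
        have hh : (QuotientGroup.mk (rep q * h) : G ⧸ H) = QuotientGroup.mk (rep q) :=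
          QuotientGroup.eq.mpr (by simpa [mul_assoc] using H.inv_mem hhH)
        rw [hh, hrepq _ hqS]
      have hq' : (QuotientGroup.mk (rep q' * h') : G ⧸ H) = q' := by
        have hh : (QuotientGroup.mk (rep q' * h') : G ⧸ H) = QuotientGroup.mk (rep q') :=
          QuotientGroup.eq.mpr (by simpa [mul_assoc] using H.inv_mem hhH')
        rw [hh, hrepq _ hqS']
      have hqq : q = q' := by rw [← hq, ← hq', heq]
      subst hqq
      have : h = h' := mul_left_cancel heq
      simp [this]
end

section
/- Let K ≥ 1 be a real number, let G be a group, let A be a K-approximate subgroup of G, and let H be a subgroup of G. Then for every integer k ≥ 1 one has |A^k ∩ H| ≤ K^(k-1) · |A² ∩ H|. -/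
open scoped Pointwise

/-!
Iterating `A·A ⊆ X·A` gives `A^(n+1) ⊆ X^n·A`, so `A^(n+1) ∩ H` is covered by the at most
`K^n` slices `y·A ∩ H` with `y ∈ X^n`. Each nonempty slice `y·A ∩ H` is a left translate,
by an element `y a₀` of `H`, of a subset of `a₀⁻¹·A ∩ H ⊆ A⁻¹A ∩ H = A² ∩ H`.
-/

lemma Set.inv_eq_self_of_forall_inv_mem {G : Type*} [InvolutiveInv G] {A : Set G}
    (hsym : ∀ a ∈ A, a⁻¹ ∈ A) : A⁻¹ = A :=
  (Set.inv_subset.2 hsym).antisymm hsym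

lemma Set.Finite.pow {M : Type*} [Monoid M] {s : Set M} (hs : s.Finite) (n : ℕ) :
    (s ^ n).Finite := by
  induction n with
  | zero => simp
  | succ n ih => rw [pow_succ]; exact ih.mul hs

lemma Set.ncard_pow_le {M : Type*} [CancelMonoid M] (s : Set M) (n : ℕ) :
    (s ^ n).ncard ≤ s.ncard ^ n := by
  induction n with
  | zero => simp [← Set.singleton_one]
  | succ n ih =>
    rw [pow_succ, pow_succ]
    exact Set.natCard_mul_le.trans (Nat.mul_le_mul_right _ ih)

lemma Set.Finite.ncard_biUnion_le_ncard_mul {ι α : Type*} {t : Set ι} (ht : t.Finite)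
    (s : ι → Set α) {m : ℕ} (hs : ∀ i ∈ t, (s i).ncard ≤ m) :
    (⋃ i ∈ t, s i).ncard ≤ t.ncard * m := by
  calc (⋃ i ∈ t, s i).ncard ≤ ∑ i ∈ ht.toFinset, (s i).ncard := by
        simpa using ht.toFinset.set_ncard_biUnion_le s
    _ ≤ ht.toFinset.card • m := Finset.sum_le_card_nsmul _ _ _ (by simpa using hs)
    _ = t.ncard * m := by rw [Set.ncard_eq_toFinset_card t ht, smul_eq_mul]

lemma Set.pow_succ_subset_pow_mul {M : Type*} [Monoid M] {A X : Set M} (h : A * A ⊆ X * A)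
    (n : ℕ) : A ^ (n + 1) ⊆ X ^ n * A := by
  induction n with
  | zero => simp
  | succ n ih =>
    calc A ^ (n + 2) = A ^ (n + 1) * A := pow_succ A (n + 1)
      _ ⊆ X ^ n * A * A := Set.mul_subset_mul_right ih
      _ = X ^ n * (A * A) := mul_assoc _ _ _
      _ ⊆ X ^ n * (X * A) := Set.mul_subset_mul_left h
      _ = X ^ (n + 1) * A := by rw [pow_succ, mul_assoc]

section Subgroup

variable {G : Type*} [Group G] {A : Set G} (H : Subgroup G)

lemma ncard_smul_inter_subgroup_le (hA : A.Finite) (y : G) :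
    (y • A ∩ (H : Set G)).ncard ≤ (A⁻¹ * A ∩ (H : Set G)).ncard := by
  rcases (y • A ∩ (H : Set G)).eq_empty_or_nonempty with hempty | ⟨_, ⟨a₀, ha₀, rfl⟩, hya₀⟩
  · simp [hempty]
  have hsub : y • A ∩ (H : Set G) ⊆ (y * a₀) • (A⁻¹ * A ∩ (H : Set G)) := by
    rintro _ ⟨⟨a, ha, rfl⟩, hyaH⟩
    refine ⟨a₀⁻¹ * a, ⟨Set.mul_mem_mul (Set.inv_mem_inv.2 ha₀) ha, ?_⟩, by simp [mul_assoc]⟩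
    simpa [mul_assoc] using H.mul_mem (H.inv_mem hya₀) hyaH
  calc (y • A ∩ (H : Set G)).ncard
      ≤ ((y * a₀) • (A⁻¹ * A ∩ (H : Set G))).ncard :=
        Set.ncard_le_ncard hsub ((hA.inv.mul hA).inter_of_left _).smul_set
    _ = (A⁻¹ * A ∩ (H : Set G)).ncard := Set.ncard_smul_set _ _

lemma ncard_inter_subgroup_le_of_subset_mul {S Y : Set G} (hY : Y.Finite) (hA : A.Finite)
    (hS : S ⊆ Y * A) :
    (S ∩ (H : Set G)).ncard ≤ Y.ncard * (A⁻¹ * A ∩ (H : Set G)).ncard := by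
  have hcover : S ∩ (H : Set G) ⊆ ⋃ y ∈ Y, y • A ∩ (H : Set G) := by
    rintro _ ⟨hz, hzH⟩
    obtain ⟨y, hy, a, ha, rfl⟩ := hS hz
    exact Set.mem_biUnion hy ⟨⟨a, ha, rfl⟩, hzH⟩
  calc (S ∩ (H : Set G)).ncard ≤ (⋃ y ∈ Y, y • A ∩ (H : Set G)).ncard :=
        Set.ncard_le_ncard hcover (hY.biUnion fun _ _ => hA.smul_set.inter_of_left _)
    _ ≤ Y.ncard * (A⁻¹ * A ∩ (H : Set G)).ncard :=
        hY.ncard_biUnion_le_ncard_mul _ fun y _ => ncard_smul_inter_subgroup_le H hA y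

end Subgroup

theorem stmt_2_general {G : Type*} [Group G] (K : ℝ) (A : Set G)
    (hA : IsApproxSubgroup K A) (H : Subgroup G) :
    ∀ k : ℕ, 1 ≤ k →
      ((A ^ k ∩ (H : Set G)).ncard : ℝ) ≤ K ^ (k - 1) * (A * A ∩ (H : Set G)).ncard := by
  obtain ⟨hAfin, -, hsym, X, hXfin, -, -, hXcard, hcover⟩ := hA
  intro k hk
  obtain ⟨n, rfl⟩ := Nat.exists_eq_add_of_le' hk
  have hAA : A * A = A⁻¹ * A := by rw [Set.inv_eq_self_of_forall_inv_mem hsym]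
  rw [Nat.add_sub_cancel, hAA]
  have hcount := ncard_inter_subgroup_le_of_subset_mul H (hXfin.pow n) hAfin
    (Set.pow_succ_subset_pow_mul hcover n)
  have hXn : ((X ^ n).ncard : ℝ) ≤ K ^ n :=
    calc ((X ^ n).ncard : ℝ) ≤ (X.ncard : ℝ) ^ n := by exact_mod_cast Set.ncard_pow_le X n
      _ ≤ K ^ n := pow_le_pow_left₀ (Nat.cast_nonneg _) hXcard n
  calc ((A ^ (n + 1) ∩ (H : Set G)).ncard : ℝ)
      ≤ (X ^ n).ncard * (A⁻¹ * A ∩ (H : Set G)).ncard := by exact_mod_cast hcount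
    _ ≤ K ^ n * (A⁻¹ * A ∩ (H : Set G)).ncard := by gcongr

/-- Lemma (basic)(ii), second part: `|A^k ∩ H| ≤ K^(k-1) |A² ∩ H|` for `k ≥ 1`. -/
theorem stmt_2 {G : Type*} [Group G] (K : ℝ) (hK : 1 ≤ K) (A : Set G)
    (hA : IsApproxSubgroup K A) (H : Subgroup G) :
    ∀ k : ℕ, 1 ≤ k →
      ((A ^ k ∩ (H : Set G)).ncard : ℝ) ≤ K ^ (k - 1) * (A * A ∩ (H : Set G)).ncard :=
  stmt_2_general K A hA H
end

section
/- Let G be a group, let H₀ = {1} ⊆ H₁ ⊆ ⋯ ⊆ H_k be a nested sequence of subgroups of G, let K ≥ 1 be a real number, and let A be a K-approximate subgroup of G. For each i set A_i := A² ∩ H_i, and assume that for every i = 0, …, k−1 the subgroup generated by A_{i+1} is not contained in the set A_{i+1}·H_i. Then k ≤ K⁴. -/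
open scoped Pointwise

/-! If `A_{i+1}² ⊆ A_{i+1}·H_i`, then `A_{i+1}·H_i` is stable under left multiplication by the
symmetric set `A_{i+1}` and so contains `⟨A_{i+1}⟩`; hence the hypothesis provides some
`x_i ∈ A_{i+1}² \ A_{i+1}·H_i ⊆ A⁴`. The translates `A·x_i ⊆ A⁵` are pairwise disjoint: for `i < j`,
`a·x_i = b·x_j` would give `x_j = (b⁻¹a)·x_i` with `b⁻¹a = x_j x_i⁻¹ ∈ A² ∩ H_{j+1}` and
`x_i ∈ H_j`. Therefore `k·|A| ≤ |A⁵| ≤ K⁴·|A|`, the last step because `A²` is covered by `K`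
translates of `A`. -/

open Finset

section

variable {G : Type*} [Group G]

theorem IsApproxSubgroup.isApproximateSubgroup {K : ℝ} {A : Set G}
    (hA : IsApproxSubgroup K A) : IsApproximateSubgroup K A := by
  obtain ⟨-, h1A, hAinv, X, hXfin, -, -, hXK, hXA⟩ := hA
  refine ⟨h1A, Set.inv_eq_self_iff_inv_subset.mpr fun a ha => inv_inv a ▸ hAinv _ ha,
    hXfin.toFinset, ?_, ?_⟩
  · rwa [← Set.ncard_eq_toFinset_card X hXfin]
  · rw [Set.Finite.coe_toFinset, sq]
    exact hXA

theorem Subgroup.closure_subset_mul_of_mul_self_subset {S : Set G} {L : Subgroup G}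
    (h1S : (1 : G) ∈ S) (hSinv : S⁻¹ = S) (hSS : S * S ⊆ S * L) :
    (closure S : Set G) ⊆ S * L := by
  have mul_mem : ∀ s ∈ S, ∀ y ∈ S * (L : Set G), s * y ∈ S * (L : Set G) := by
    rintro s hs _ ⟨t, ht, l, hl, rfl⟩
    obtain ⟨t', ht', l', hl', hst⟩ := hSS (Set.mul_mem_mul hs ht)
    rw [← mul_assoc, ← hst, mul_assoc]
    exact Set.mul_mem_mul ht' (L.mul_mem hl' hl)
  intro x hx
  induction hx using closure_induction_left with
  | one => exact ⟨1, h1S, 1, L.one_mem, one_mul 1⟩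
  | mul_left s hs y _ hy => exact mul_mem s hs y hy
  | inv_mul_cancel s hs y _ hy => exact mul_mem s⁻¹ (hSinv ▸ Set.inv_mem_inv.mpr hs) y hy

theorem Set.mul_self_inter_subgroup_inv {A : Set G} (hA : A⁻¹ = A) (L : Subgroup G) :
    (A * A ∩ (L : Set G))⁻¹ = A * A ∩ L := by
  rw [Set.inter_inv, mul_inv_rev, hA, inv_coe_set]

theorem mul_ne_mul_of_notMem_inter_mul {A : Set G} (hA : A⁻¹ = A) {L M : Subgroup G}
    (hLM : L ≤ M) {x y a b : G} (hx : x ∈ L) (hyM : y ∈ M)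
    (hy : y ∉ (A * A ∩ M) * L) (ha : a ∈ A) (hb : b ∈ A) : a * x ≠ b * y := by
  intro h
  have hy_eq : y = b⁻¹ * a * x := by rw [mul_assoc, h, inv_mul_cancel_left]
  have hba : b⁻¹ * a = y * x⁻¹ := by rw [hy_eq, mul_inv_cancel_right]
  refine hy ⟨b⁻¹ * a, ⟨Set.mul_mem_mul (hA ▸ Set.inv_mem_inv.mpr hb) ha, ?_⟩, x, hx, hy_eq.symm⟩
  rw [hba]
  exact M.mul_mem hyM (M.inv_mem (hLM hx))

theorem MonotoneOn.injOn_mul_of_forall_notMem {A : Set G} (hA : A⁻¹ = A) {k : ℕ}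
    {H : ℕ → Subgroup G} (hH : MonotoneOn H (Set.Iic k)) {x : Fin k → G}
    (hxH : ∀ i : Fin k, x i ∈ H (i + 1)) (hx : ∀ i : Fin k, x i ∉ (A * A ∩ H (i + 1)) * H i) :
    Set.InjOn (fun p : Fin k × G => p.2 * x p.1) (Set.univ ×ˢ A) := by
  have hne (i j : Fin k) (hij : i < j) (a b : G) (ha : a ∈ A) (hb : b ∈ A) :
      a * x i ≠ b * x j := by
    have hHj : H j ≤ H (j + 1) := hH j.isLt.le j.isLt (Nat.le_succ j)
    have hxi : x i ∈ H j := hH i.isLt j.isLt.le hij (hxH i)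
    exact mul_ne_mul_of_notMem_inter_mul hA hHj hxi (hxH j) (hx j) ha hb
  rintro ⟨i, a⟩ ⟨-, ha⟩ ⟨j, b⟩ ⟨-, hb⟩ (h : a * x i = b * x j)
  obtain rfl : i = j := by
    rcases lt_trichotomy i j with hij | rfl | hji
    · exact absurd h (hne i j hij a b ha hb)
    · rfl
    · exact absurd h.symm (hne j i hji b a hb ha)
  rw [mul_left_inj] at h
  rw [h]

theorem Finset.card_mul_le_card_mul_of_injOn [DecidableEq G] {A B : Finset G} {k : ℕ}
    {x : Fin k → G} (hxB : ∀ i, x i ∈ B)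
    (hinj : Set.InjOn (fun p : Fin k × G => p.2 * x p.1) (Set.univ ×ˢ (A : Set G))) :
    k * #A ≤ #(A * B) :=
  calc k * #A = #(univ ×ˢ A) := by rw [card_product, card_univ, Fintype.card_fin]
    _ ≤ #(A * B) := card_le_card_of_injOn _
        (fun p hp => mul_mem_mul (mem_product.mp hp).2 (hxB p.1))
        (by simpa only [coe_product, coe_univ] using hinj)

end

theorem stmt_5_general {G : Type*} [Group G] (k : ℕ) (H : ℕ → Subgroup G)
    (hmono : ∀ i, i < k → H i ≤ H (i + 1))
    (K : ℝ) (A : Set G) (hA : IsApproxSubgroup K A)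
    (hgen : ∀ i, i < k →
      ¬ ((Subgroup.closure (A * A ∩ (H (i + 1) : Set G)) : Set G) ⊆
          (A * A ∩ (H (i + 1) : Set G)) * (H i : Set G))) :
    (k : ℝ) ≤ K ^ 4 := by
  classical
  have hA' := hA.isApproximateSubgroup
  have hH : MonotoneOn H (Set.Iic k) := monotoneOn_of_le_succ Set.ordConnected_Iic
    fun i _ _ hi => by
      rw [Order.succ_eq_add_one] at hi ⊢
      exact hmono i hi
  have h1 : (1 : G) ∈ A * A := ⟨1, hA'.one_mem, 1, hA'.one_mem, one_mul 1⟩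
  have hsep (i : Fin k) := Set.not_subset.mp fun hsq => hgen i i.isLt <|
    Subgroup.closure_subset_mul_of_mul_self_subset ⟨h1, one_mem _⟩
      (Set.mul_self_inter_subgroup_inv hA'.inv_eq_self _) hsq
  choose x hxS hx using hsep
  have hxH (i : Fin k) : x i ∈ H (i + 1) := by
    obtain ⟨a, ha, b, hb, hab⟩ := hxS i
    exact hab ▸ mul_mem ha.2 hb.2
  lift A to Finset G using hA.1
  have hxA (i : Fin k) : x i ∈ A ^ 4 := by
    rw [← mem_coe, coe_pow, show 4 = 2 + 2 from rfl, pow_add, sq]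
    exact Set.mul_subset_mul Set.inter_subset_left Set.inter_subset_left (hxS i)
  have hcard : (k : ℝ) * #A ≤ K ^ 4 * #A :=
    calc (k : ℝ) * #A ≤ #(A ^ 5) := by
          rw [pow_succ']
          exact_mod_cast card_mul_le_card_mul_of_injOn hxA
            (hH.injOn_mul_of_forall_notMem hA'.inv_eq_self hxH hx)
      _ ≤ K ^ 4 * #A := hA'.card_pow_le
  have hA_pos : (0 : ℝ) < #A := by exact_mod_cast (coe_nonempty.mp hA'.nonempty).card_pos
  exact le_of_mul_le_mul_right hcard hA_pos

/-- If `A` is a `K`-approximate subgroup and `{1} = H₀ ⊆ H₁ ⊆ ⋯ ⊆ H_k` is a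
chain of subgroups with `⟨A_{i+1}⟩ ⊄ A_{i+1}·H_i` for all `i < k`, where
`A_i := A² ∩ H_i`, then `k ≤ K⁴`. -/
theorem stmt_5 {G : Type*} [Group G] (k : ℕ) (H : ℕ → Subgroup G)
    (hH0 : H 0 = ⊥) (hmono : ∀ i, i < k → H i ≤ H (i + 1))
    (K : ℝ) (hK : 1 ≤ K) (A : Set G) (hA : IsApproxSubgroup K A)
    (hgen : ∀ i, i < k →
      ¬ ((Subgroup.closure (A * A ∩ (H (i + 1) : Set G)) : Set G) ⊆
          (A * A ∩ (H (i + 1) : Set G)) * (H i : Set G))) :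
    (k : ℝ) ≤ K ^ 4 :=
  stmt_5_general k H hmono K A hA hgen
end

section
/- Let G be a residually nilpotent group, i.e. the intersection of the terms of the lower central series of G (C₁ = G, C_{i+1} = [G, C_i]) is the trivial subgroup. Let K ≥ 1 be a real number and let A be a finite K-approximate subgroup of G with A ≠ {1}. Then there exists an element γ ∈ A² with γ ≠ 1 such that |A² ∩ C_G(γ)| ≥ |A| / K⁶, where C_G(γ) = {g ∈ G : gγ = γg} is the centralizer of γ in G. -/
/-!
Since `A²` is finite and the lower central series meets in `{1}`, there is a last index `i` with
`A² ∩ C_i ≠ {1}`; take `γ ≠ 1` there, so that `A² ∩ C_{i+1} = {1}`. Every conjugate `aγa⁻¹`,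
`a ∈ A`, lies in the coset `γ C_{i+1}` and in `A⁴ ⊆ X³A`. Two such conjugates `xb`, `xb'` with the
same `x ∈ X³` differ by `b⁻¹b' ∈ A² ∩ C_{i+1} = {1}`, so `γ` has at most `|X|³ ≤ K³` conjugates
under `A`. Elements of `A` giving the same conjugate differ by an element of `A² ∩ C_G(γ)`, hence
`|A| ≤ |A² ∩ C_G(γ)| K³`.
-/

open scoped Pointwise

open Filter Set

namespace Set

variable {M : Type*}

theorem Finite.pow_s7 [Monoid M] {s : Set M} (hs : s.Finite) (n : ℕ) : (s ^ n).Finite := by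
  induction n with
  | zero => simp
  | succ n ih => rw [pow_succ]; exact ih.mul hs

theorem ncard_pow_le_s7 [CancelMonoid M] (s : Set M) (n : ℕ) : (s ^ n).ncard ≤ s.ncard ^ n := by
  induction n with
  | zero => simp [← singleton_one]
  | succ n ih =>
    calc (s ^ (n + 1)).ncard ≤ (s ^ n).ncard * s.ncard := by
          simpa only [pow_succ, Nat.card_coe_set_eq] using natCard_mul_le (s := s ^ n) (t := s)
      _ ≤ s.ncard ^ (n + 1) := by rw [pow_succ]; gcongr

theorem pow_succ_subset_pow_mul_s7 [Monoid M] {A X : Set M} (h : A * A ⊆ X * A) (n : ℕ) :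
    A ^ (n + 1) ⊆ X ^ n * A := by
  induction n with
  | zero => simp
  | succ n ih =>
    calc A ^ (n + 2) = A ^ (n + 1) * A := pow_succ _ _
      _ ⊆ X ^ n * A * A := mul_subset_mul_right ih
      _ = X ^ n * (A * A) := mul_assoc _ _ _
      _ ⊆ X ^ n * (X * A) := mul_subset_mul_left h
      _ = X ^ (n + 1) * A := by rw [pow_succ, mul_assoc]

end Set

section Group

variable {G : Type*} [Group G]

theorem Set.Finite.eventually_forall_mem_eq_one {H : ℕ → Subgroup G} (hH : Antitone H)
    (hbot : ⨅ n, H n = ⊥) {S : Set G} (hS : S.Finite) :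
    ∀ᶠ n in atTop, ∀ g ∈ S, g ∈ H n → g = 1 := by
  refine hS.eventually_all.2 fun g _ => ?_
  by_cases hg : g = 1
  · exact Eventually.of_forall fun _ _ => hg
  obtain ⟨n, hn⟩ : ∃ n, g ∉ H n := by
    by_contra! h
    exact hg (by simpa [hbot] using Subgroup.mem_iInf.2 h)
  exact eventually_atTop.2 ⟨n, fun m hm hgm => absurd (hH hm hgm) hn⟩

theorem Set.Finite.exists_last_nontrivial_level {H : ℕ → Subgroup G} (hH : Antitone H)
    (h0 : H 0 = ⊤) (hbot : ⨅ n, H n = ⊥) {S : Set G} (hS : S.Finite) {g₀ : G} (hg₀S : g₀ ∈ S)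
    (hg₀ : g₀ ≠ 1) :
    ∃ i, ∃ γ ∈ S, γ ≠ 1 ∧ γ ∈ H i ∧ ∀ g ∈ S, g ∈ H (i + 1) → g = 1 := by
  classical
  have hex := (hS.eventually_forall_mem_eq_one hH hbot).exists
  obtain ⟨i, hi⟩ : ∃ i, Nat.find hex = i + 1 := by
    refine Nat.exists_eq_succ_of_ne_zero fun h => hg₀ ?_
    have := Nat.find_spec hex
    rw [h, h0] at this
    exact this g₀ hg₀S (Subgroup.mem_top g₀)
  have hmin := Nat.find_min hex (show i < Nat.find hex by omega)
  push Not at hmin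
  obtain ⟨γ, hγS, hγi, hγ⟩ := hmin
  exact ⟨i, γ, hγS, hγ, hγi, hi ▸ Nat.find_spec hex⟩

theorem inv_mul_conj_mem_lowerCentralSeries_succ {γ : G} {i : ℕ}
    (hγ : γ ∈ (⊤ : Subgroup G).lowerCentralSeries i) (a : G) :
    γ⁻¹ * (a * γ * a⁻¹) ∈ (⊤ : Subgroup G).lowerCentralSeries (i + 1) := by
  have h := Subgroup.commutator_mem_commutator (inv_mem hγ) (Subgroup.mem_top a)
  rw [commutatorElement_def, inv_inv] at h
  rw [Subgroup.lowerCentralSeries_succ]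
  simpa only [mul_assoc] using h

theorem Set.ncard_le_ncard_of_subset_mul {T Y B : Set G} {H : Subgroup G} (hY : Y.Finite)
    (hTY : T ⊆ Y * B) (hT : ∀ t ∈ T, ∀ t' ∈ T, t⁻¹ * t' ∈ H)
    (hB : ∀ b ∈ B, ∀ b' ∈ B, b⁻¹ * b' ∈ H → b = b') : T.ncard ≤ Y.ncard := by
  choose! y hy b hb hyb using fun t (ht : t ∈ T) => mem_mul.1 (hTY ht)
  refine ncard_le_ncard_of_injOn y hy (fun t ht t' ht' hyy => ?_) hY
  have hquot : t⁻¹ * t' = (b t)⁻¹ * b t' :=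
    calc t⁻¹ * t' = (y t * b t)⁻¹ * (y t' * b t') := by rw [hyb t ht, hyb t' ht']
      _ = (b t)⁻¹ * b t' := by rw [hyy]; group
  have hbb : b t = b t' := hB _ (hb t ht) _ (hb t' ht') (hquot ▸ hT t ht t' ht')
  calc t = y t * b t := (hyb t ht).symm
    _ = y t' * b t' := by rw [hyy, hbb]
    _ = t' := hyb t' ht'

theorem Set.ncard_le_ncard_inter_centralizer_mul_ncard_conj_image {A : Set G} (hA : A.Finite)
    (γ : G) :
    A.ncard ≤ (A⁻¹ * A ∩ {g | g * γ = γ * g}).ncard * ((fun a => a * γ * a⁻¹) '' A).ncard := by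
  classical
  lift A to Finset G using hA
  rw [← Finset.coe_image, ncard_coe_finset, ncard_coe_finset]
  refine Finset.card_le_mul_card_image _ _ fun _ ht => ?_
  obtain ⟨a₁, ha₁, rfl⟩ := Finset.mem_image.1 ht
  rw [← ncard_coe_finset]
  refine ncard_le_ncard_of_injOn (a₁⁻¹ * ·) (fun a ha => ?_) (mul_right_injective _).injOn
    ((A.finite_toSet.inv.mul A.finite_toSet).inter_of_left _)
  simp only [Finset.coe_filter] at ha
  refine ⟨mul_mem_mul (inv_mem_inv.2 ha₁) ha.1, ?_⟩
  calc a₁⁻¹ * a * γ = a₁⁻¹ * (a * γ * a⁻¹) * a := by group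
    _ = a₁⁻¹ * (a₁ * γ * a₁⁻¹) * a := by rw [ha.2]
    _ = γ * (a₁⁻¹ * a) := by group

theorem Set.ncard_conj_image_le {A X : Set G} {γ : G} {i : ℕ} (hX : X.Finite)
    (hcov : A * A ⊆ X * A) (hsymm : ∀ a ∈ A, a⁻¹ ∈ A) (hγA : γ ∈ A * A)
    (hγ : γ ∈ (⊤ : Subgroup G).lowerCentralSeries i)
    (hsep : ∀ g ∈ A * A, g ∈ (⊤ : Subgroup G).lowerCentralSeries (i + 1) → g = 1) :
    ((fun a => a * γ * a⁻¹) '' A).ncard ≤ X.ncard ^ 3 := by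
  refine (ncard_le_ncard_of_subset_mul (B := A)
    (H := (⊤ : Subgroup G).lowerCentralSeries (i + 1)) (hX.pow_s7 3) ?_ ?_ ?_).trans (ncard_pow_le_s7 X 3)
  · rintro _ ⟨a, ha, rfl⟩
    refine pow_succ_subset_pow_mul_s7 hcov 3 ?_
    obtain ⟨b, hb, c, hc, rfl⟩ := mem_mul.1 hγA
    beta_reduce
    rw [show a * (b * c) * a⁻¹ = a * b * c * a⁻¹ by group]
    simpa only [pow_succ, pow_zero, one_mul] using
      mul_mem_mul (mul_mem_mul (mul_mem_mul ha hb) hc) (hsymm a ha)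
  · rintro _ ⟨a, -, rfl⟩ _ ⟨a', -, rfl⟩
    convert mul_mem (inv_mem (inv_mul_conj_mem_lowerCentralSeries_succ hγ a))
      (inv_mul_conj_mem_lowerCentralSeries_succ hγ a') using 1
    group
  · exact fun b hb b' hb' h => inv_mul_eq_one.1 (hsep _ (mul_mem_mul (hsymm b hb) hb') h)

end Group

/-- Proposition (large centralizer): in a residually nilpotent group, any
`K`-approximate subgroup `A ≠ {1}` contains a nontrivial element `γ ∈ A²`
with `|A² ∩ C_G(γ)| ≥ |A|/K⁶`. -/
theorem stmt_7 {G : Type*} [Group G]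
    (hres : (⨅ n : ℕ, (⊤ : Subgroup G).lowerCentralSeries n) = ⊥)
    (K : ℝ) (hK : 1 ≤ K) (A : Set G) (hA : IsApproxSubgroup K A)
    (hnontriv : A ≠ {1}) :
    ∃ γ ∈ A * A, γ ≠ 1 ∧
      (A.ncard : ℝ) / K ^ 6 ≤ ((A * A ∩ {g : G | g * γ = γ * g}).ncard : ℝ) := by
  obtain ⟨hfin, h1, hsymm, X, hXfin, -, -, hXK, hcov⟩ := hA
  obtain ⟨a₀, ha₀, ha₀1⟩ : ∃ a ∈ A, a ≠ 1 := by
    by_contra! h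
    exact hnontriv (eq_singleton_iff_unique_mem.2 ⟨h1, h⟩)
  obtain ⟨i, γ, hγA, hγ1, hγi, hsep⟩ := (hfin.mul hfin).exists_last_nontrivial_level
    (Subgroup.lowerCentralSeries_antitone ⊤) rfl hres (mul_one a₀ ▸ mul_mem_mul ha₀ h1) ha₀1
  refine ⟨γ, hγA, hγ1, ?_⟩
  have horbit := ncard_le_ncard_inter_centralizer_mul_ncard_conj_image hfin γ
  rw [inv_eq_self_iff_inv_subset.2 fun a ha => inv_inv a ▸ hsymm _ ha] at horbit
  have hconj := ncard_conj_image_le hXfin hcov hsymm hγA hγi hsep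
  have hXK6 : (X.ncard : ℝ) ^ 3 ≤ K ^ 6 :=
    (pow_le_pow_left₀ (Nat.cast_nonneg _) hXK 3).trans (pow_le_pow_right₀ hK (by norm_num))
  rw [div_le_iff₀ (by positivity)]
  calc (A.ncard : ℝ) ≤ (A * A ∩ {g : G | g * γ = γ * g}).ncard * (X.ncard : ℝ) ^ 3 := by
        exact_mod_cast horbit.trans (Nat.mul_le_mul_left _ hconj)
    _ ≤ _ := mul_le_mul_of_nonneg_left hXK6 (Nat.cast_nonneg _)
end

section
/- Let K ≥ 1 be a real number, let G be a group, let A be a K-approximate subgroup of G, and let H be a subgroup of G with A² ∩ H = {1}. Then |A⁶ ∩ H| ≤ K⁶. -/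
open scoped Pointwise

lemma ncard_mul_le' {G : Type*} [Group G] (s t : Set G) :
    (s * t).ncard ≤ s.ncard * t.ncard := by
  simpa [Set.ncard_eq_toFinset_card', Nat.card_coe_set_eq] using
    (Set.natCard_mul_le (s := s) (t := t))

lemma ncard_pow_le {G : Type*} [Group G] (X : Set G) (n : ℕ) :
    (X ^ (n + 1)).ncard ≤ X.ncard ^ (n + 1) := by
  induction n with
  | zero => simp
  | succ n ih =>
      calc (X ^ (n + 2)).ncard = (X ^ (n + 1) * X).ncard := by rw [pow_succ]
        _ ≤ (X ^ (n + 1)).ncard * X.ncard := ncard_mul_le' _ _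
        _ ≤ X.ncard ^ (n + 1) * X.ncard := Nat.mul_le_mul_right _ ih
        _ = X.ncard ^ (n + 2) := (pow_succ _ _).symm

/-- If `A` is a `K`-approximate subgroup and `H` is a subgroup with
`A² ∩ H = {1}`, then `|A⁶ ∩ H| ≤ K⁶`. -/
theorem stmt_8 {G : Type*} [Group G] (K : ℝ) (hK : 1 ≤ K) (A : Set G)
    (hA : IsApproxSubgroup K A) (H : Subgroup G)
    (htriv : A * A ∩ (H : Set G) = {1}) :
    ((A ^ 6 ∩ (H : Set G)).ncard : ℝ) ≤ K ^ 6 := by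
  obtain ⟨hfin, h1, hsym, X, hXfin, hXsub, hXsym, hXcard, hcov⟩ := hA
  -- A^(n+1) ⊆ X^n * A
  have hstep : ∀ n : ℕ, A ^ (n + 1) ⊆ X ^ n * A := by
    intro n
    induction n with
    | zero => simp
    | succ n ih =>
        calc A ^ (n + 2) = A ^ (n + 1) * A := pow_succ _ _
          _ ⊆ (X ^ n * A) * A := Set.mul_subset_mul_right ih
          _ = X ^ n * (A * A) := mul_assoc _ _ _
          _ ⊆ X ^ n * (X * A) := Set.mul_subset_mul_left hcov
          _ = (X ^ n * X) * A := (mul_assoc _ _ _).symm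
          _ = X ^ (n + 1) * A := by rw [pow_succ]
  have hA6 : A ^ 6 ⊆ X ^ 5 * A := hstep 5
  -- choose decomposition
  have key : ∀ h : G, ∃ x a : G, h ∈ A ^ 6 ∩ (H : Set G) →
      x ∈ X ^ 5 ∧ a ∈ A ∧ x * a = h := by
    intro h
    by_cases hh : h ∈ A ^ 6 ∩ (H : Set G)
    · obtain ⟨x, hx, a, ha, hxa⟩ := Set.mem_mul.1 (hA6 hh.1)
      exact ⟨x, a, fun _ => ⟨hx, ha, hxa⟩⟩
    · exact ⟨1, 1, fun h' => absurd h' hh⟩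
  choose f g hfg using key
  have hX5fin : (X ^ 5 : Set G).Finite := by
    have : (X ^ 5 : Set G) = X * X * X * X * X := by
      rw [show (5 : ℕ) = 4 + 1 from rfl, pow_succ, pow_succ, pow_succ, pow_succ, pow_one]
    rw [this]
    exact (((hXfin.mul hXfin).mul hXfin).mul hXfin).mul hXfin
  have hcount : (A ^ 6 ∩ (H : Set G)).ncard ≤ (X ^ 5 : Set G).ncard := by
    refine Set.ncard_le_ncard_of_injOn f ?_ ?_ hX5fin
    · intro h hh
      exact (hfg h hh).1
    · intro h1 hh1 h2 hh2 hf
      obtain ⟨hx1, ha1, he1⟩ := hfg h1 hh1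
      obtain ⟨hx2, ha2, he2⟩ := hfg h2 hh2
      have hmem : h1⁻¹ * h2 ∈ A * A ∩ (H : Set G) := by
        constructor
        · have : h1⁻¹ * h2 = (g h1)⁻¹ * g h2 := by
            calc h1⁻¹ * h2 = (f h1 * g h1)⁻¹ * (f h2 * g h2) := by rw [he1, he2]
              _ = (g h1)⁻¹ * g h2 := by rw [hf]; group
          rw [this]
          exact Set.mul_mem_mul (hsym _ ha1) ha2
        · exact mul_mem (inv_mem hh1.2) hh2.2
      rw [htriv] at hmem
      have : h1⁻¹ * h2 = 1 := hmem
      calc h1 = h1 * (h1⁻¹ * h2) := by rw [this, mul_one]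
        _ = h2 := by group
  have hXnat : (X.ncard : ℝ) ^ 5 ≤ K ^ 5 :=
    pow_le_pow_left₀ (by positivity) hXcard 5
  calc ((A ^ 6 ∩ (H : Set G)).ncard : ℝ) ≤ ((X ^ 5 : Set G).ncard : ℝ) := by
        exact_mod_cast hcount
    _ ≤ (X.ncard : ℝ) ^ 5 := by exact_mod_cast ncard_pow_le X 4
    _ ≤ K ^ 5 := hXnat
    _ ≤ K ^ 6 := pow_le_pow_right₀ hK (by norm_num)
end

section
/- Let K ≥ 1 and M ≥ 1 be real numbers, let G be a group, let A be a K-approximate subgroup of G, and let H be a subgroup of G such that |A² ∩ H| ≥ |A| / M. Then A can be covered by at most K²·M left cosets of H; that is, there is a finite subset F of G with |F| ≤ K²·M and A ⊆ F·H. -/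
open scoped Pointwise

/-- Covering lemma: if `|A² ∩ H| ≥ |A|/M` then `A` is covered by at most
`K²·M` left cosets of `H`. -/
theorem stmt_11 {G : Type*} [Group G] (K M : ℝ) (hK : 1 ≤ K) (hM : 1 ≤ M)
    (A : Set G) (hA : IsApproxSubgroup K A) (H : Subgroup G)
    (hbig : (A.ncard : ℝ) / M ≤ ((A * A ∩ (H : Set G)).ncard : ℝ)) :
    ∃ F : Set G, F.Finite ∧ (F.ncard : ℝ) ≤ K ^ 2 * M ∧
      A ⊆ F * (H : Set G) := by
  classical
  obtain ⟨hAfin, h1A, hinv, X, hXfin, hXsub, hXinv, hXcard, hcov⟩ := hA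
  set B : Set G := A * A ∩ (H : Set G) with hBdef
  have hAA : (A * A).Finite := hAfin.mul hAfin
  have hBfin : B.Finite := hAA.inter_of_left _
  have hA3fin : (A * A * A).Finite := hAA.mul hAfin
  have hApos : 0 < (A.ncard : ℝ) := by
    have : 0 < A.ncard := (Set.ncard_pos hAfin).mpr ⟨1, h1A⟩
    exact_mod_cast this
  have hMpos : (0 : ℝ) < M := lt_of_lt_of_le one_pos hM
  have hBpos : 0 < (B.ncard : ℝ) := lt_of_lt_of_le (div_pos hApos hMpos) hbig
  set T : Set (G ⧸ H) := QuotientGroup.mk '' A with hTdef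
  have hTfin : T.Finite := hAfin.image _
  have hsec : ∀ c ∈ T, ∃ a, a ∈ A ∧ QuotientGroup.mk a = c := by
    rintro c ⟨a, ha, rfl⟩; exact ⟨a, ha, rfl⟩
  choose! f hfA hfmk using hsec
  -- membership of products
  have hmem : ∀ (c : T) (b : B), (f c * (b : G)) ∈ A * A * A := by
    rintro ⟨c, hc⟩ ⟨b, hb⟩
    have h1 : f c ∈ A := hfA c hc
    have h2 : b ∈ A * A := hb.1
    have := Set.mul_mem_mul h1 h2
    rwa [← mul_assoc] at this
  -- counting: an injection T × B → A*A*A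
  have hcount : T.ncard * B.ncard ≤ (A * A * A).ncard := by
    have hfin : Finite (A * A * A : Set G) := hA3fin
    have hinj : Function.Injective
        (fun p : T × B => (⟨f p.1 * (p.2 : G), hmem p.1 p.2⟩ : (A * A * A : Set G))) := by
      rintro ⟨⟨c, hc⟩, ⟨b, hb⟩⟩ ⟨⟨c', hc'⟩, ⟨b', hb'⟩⟩ h
      have hval : f c * b = f c' * b' := congrArg Subtype.val h
      have hcc : c = c' := by
        have e1 : (QuotientGroup.mk (f c * b) : G ⧸ H) = QuotientGroup.mk (f c) :=
          QuotientGroup.mk_mul_of_mem _ hb.2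
        have e2 : (QuotientGroup.mk (f c' * b') : G ⧸ H) = QuotientGroup.mk (f c') :=
          QuotientGroup.mk_mul_of_mem _ hb'.2
        calc c = QuotientGroup.mk (f c) := (hfmk c hc).symm
          _ = QuotientGroup.mk (f c * b) := e1.symm
          _ = QuotientGroup.mk (f c' * b') := by rw [hval]
          _ = QuotientGroup.mk (f c') := e2
          _ = c' := hfmk c' hc'
      have hff : f c = f c' := by rw [hcc]
      have hbb : b = b' := by
        have := hval
        rw [hff] at this
        exact mul_left_cancel this
      simp [Prod.ext_iff, Subtype.ext_iff, hcc, hbb]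
    have := Nat.card_le_card_of_injective _ hinj
    rwa [Nat.card_prod, Nat.card_coe_set_eq, Nat.card_coe_set_eq,
      Nat.card_coe_set_eq] at this
  -- A*A*A ⊆ X*X*A
  have hsub3 : A * A * A ⊆ X * X * A := by
    calc A * A * A ⊆ X * A * A := Set.mul_subset_mul_right hcov
      _ = X * (A * A) := mul_assoc _ _ _
      _ ⊆ X * (X * A) := Set.mul_subset_mul_left hcov
      _ = X * X * A := (mul_assoc _ _ _).symm
  have hXXA : ((A * A * A).ncard : ℝ) ≤ K * K * (A.ncard : ℝ) := by
    have h1 : (A * A * A).ncard ≤ (X * X * A).ncard :=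
      Set.ncard_le_ncard hsub3 ((hXfin.mul hXfin).mul hAfin)
    have h2 : Nat.card ((X * X * A : Set G)) ≤ Nat.card (X * X : Set G) * Nat.card (A : Set G) :=
      Set.natCard_mul_le
    have h3 : Nat.card ((X * X : Set G)) ≤ Nat.card (X : Set G) * Nat.card (X : Set G) :=
      Set.natCard_mul_le
    have h4 : (X * X * A).ncard ≤ X.ncard * X.ncard * A.ncard := by
      simp only [← Nat.card_coe_set_eq]
      calc Nat.card (X * X * A : Set G) ≤ Nat.card (X * X : Set G) * Nat.card (A : Set G) := h2
        _ ≤ Nat.card (X : Set G) * Nat.card (X : Set G) * Nat.card (A : Set G) :=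
            Nat.mul_le_mul_right _ h3
    have h5 : (A * A * A).ncard ≤ X.ncard * X.ncard * A.ncard := h1.trans h4
    have h5' : ((A * A * A).ncard : ℝ) ≤ (X.ncard : ℝ) * X.ncard * A.ncard := by
      exact_mod_cast h5
    have hX0 : (0 : ℝ) ≤ (X.ncard : ℝ) := Nat.cast_nonneg _
    have hXX : (X.ncard : ℝ) * X.ncard ≤ K * K :=
      mul_le_mul hXcard hXcard hX0 (zero_le_one.trans hK)
    have := mul_le_mul_of_nonneg_right hXX hApos.le
    linarith
  have hTB : ((T.ncard : ℝ)) * (B.ncard : ℝ) ≤ K * K * (A.ncard : ℝ) := by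
    have h : ((T.ncard * B.ncard : ℕ) : ℝ) ≤ ((A * A * A).ncard : ℝ) := by exact_mod_cast hcount
    push_cast at h
    linarith
  refine ⟨f '' T, hTfin.image _, ?_, ?_⟩
  · have h1 : ((f '' T).ncard : ℝ) ≤ (T.ncard : ℝ) := by
      exact_mod_cast Set.ncard_image_le hTfin
    have h2 : (T.ncard : ℝ) ≤ K ^ 2 * M := by
      have hTnn : (0 : ℝ) ≤ (T.ncard : ℝ) := Nat.cast_nonneg _
      have step : (T.ncard : ℝ) * ((A.ncard : ℝ) / M) ≤ K * K * (A.ncard : ℝ) :=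
        le_trans (mul_le_mul_of_nonneg_left hbig hTnn) hTB
      rw [div_eq_mul_inv] at step
      have hMne : M ≠ 0 := ne_of_gt hMpos
      have step2 : (T.ncard : ℝ) * (A.ncard : ℝ) ≤ K * K * M * (A.ncard : ℝ) := by
        have h := mul_le_mul_of_nonneg_right step hMpos.le
        calc (T.ncard : ℝ) * A.ncard
            = (T.ncard : ℝ) * ((A.ncard : ℝ) * M⁻¹) * M := by field_simp
          _ ≤ K * K * (A.ncard : ℝ) * M := h
          _ = K * K * M * (A.ncard : ℝ) := by ring
      have h3 : (T.ncard : ℝ) ≤ K * K * M := le_of_mul_le_mul_right step2 hApos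
      have h4 : K * K * M = K ^ 2 * M := by ring
      linarith
    linarith
  · intro a ha
    have hc : (QuotientGroup.mk a : G ⧸ H) ∈ T := ⟨a, ha, rfl⟩
    have hmkeq : (QuotientGroup.mk (f (QuotientGroup.mk a)) : G ⧸ H) = QuotientGroup.mk a :=
      hfmk _ hc
    have hHmem : (f (QuotientGroup.mk a))⁻¹ * a ∈ H := (QuotientGroup.eq).mp hmkeq
    have hfin : f (QuotientGroup.mk a) * ((f (QuotientGroup.mk a))⁻¹ * a) ∈
        (f '' T) * (H : Set G) :=
      Set.mul_mem_mul (Set.mem_image_of_mem _ hc) hHmem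
    simpa using hfin
end
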